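/- Let M ∈ ℝ^{n×r}, γ ∈ ℝ^r_>, and suppose x* ∈ Z_{M,γ} and im(M)^⊥ ≠ {0}. Let B ∈ ℝ^{n×q} be a matrix with im(B) = im(M)^⊥ and ker(B) = {0}. Then Z_{M,γ} = { x* ∘ ξ^{B^T} : ξ ∈ ℝ^q_> }. -/
import Mathlib


/-- For `x ∈ ℝ^ι` and `M ∈ ℝ^{ι×κ}`, the generalized monomial vector `x^M ∈ ℝ^κ`
with `(x^M)_j = ∏ i, x i ^ M i j` (real exponentiation). -/
noncomputable def matPow {ι κ : Type*} [Fintype ι] (x : ι → ℝ) (M : Matrix ι κ ℝ) : κ → ℝ :=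
  fun j => ∏ i, x i ^ M i j

/-- The orthogonal complement of a subspace of `ℝ^n` (standard inner product). -/
def orthComp {n : ℕ} (S : Submodule ℝ (Fin n → ℝ)) : Submodule ℝ (Fin n → ℝ) where
  carrier := {v | ∀ u ∈ S, ∑ i, v i * u i = 0}
  zero_mem' := by intro u hu; simp
  add_mem' := by
    intro a b ha hb u hu
    have h1 := ha u hu
    have h2 := hb u hu
    simp only [Pi.add_apply, add_mul, Finset.sum_add_distrib, h1, h2, add_zero]
  smul_mem' := by
    intro c a ha u hu
    have h1 := ha u hu
    simp only [Pi.smul_apply, smul_eq_mul, mul_assoc, ← Finset.mul_sum, h1, mul_zero]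

lemma matPow_eq_exp {ι κ : Type*} [Fintype ι] (x : ι → ℝ) (hx : ∀ i, 0 < x i)
    (M : Matrix ι κ ℝ) (j : κ) :
    matPow x M j = Real.exp (∑ i, M i j * Real.log (x i)) := by
  rw [Real.exp_sum]
  exact Finset.prod_congr rfl fun i _ => by
    rw [Real.rpow_def_of_pos (hx i), mul_comm]

/-- given a positive solution `x*` of `x^M = γ` and a matrix `B` whose
columns form a basis of `im(M)^⊥ ≠ {0}`, `Z_{M,γ} = { x* ∘ ξ^{Bᵀ} : ξ ∈ ℝ^q_> }`. -/
theorem stmt5 {n r q : ℕ} (M : Matrix (Fin n) (Fin r) ℝ)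
    (γ : Fin r → ℝ) (hγ : ∀ j, 0 < γ j)
    (xs : Fin n → ℝ) (hxs : ∀ i, 0 < xs i) (hsol : matPow xs M = γ)
    (hMperp : orthComp (LinearMap.range M.mulVecLin) ≠ ⊥)
    (B : Matrix (Fin n) (Fin q) ℝ)
    (hB1 : LinearMap.range B.mulVecLin = orthComp (LinearMap.range M.mulVecLin))
    (hB2 : LinearMap.ker B.mulVecLin = ⊥) :
    {x : Fin n → ℝ | (∀ i, 0 < x i) ∧ matPow x M = γ} =
      {x : Fin n → ℝ | ∃ ξ : Fin q → ℝ, (∀ j, 0 < ξ j) ∧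
        x = fun i => xs i * matPow ξ B.transpose i} := by
  have BTM : ∀ k j, ∑ i, B i k * M i j = 0 := by
    intro k j
    have hcol : (fun i => B i k) ∈ orthComp (LinearMap.range M.mulVecLin) := by
      rw [← hB1]
      exact ⟨Pi.single k 1, by
        ext i
        simp [Matrix.mulVecLin, Matrix.mulVec, dotProduct, Pi.single_apply,
          mul_ite, Finset.sum_ite_eq']⟩
    exact hcol (fun i => M i j) ⟨Pi.single j 1, by
      ext i
      simp [Matrix.mulVecLin, Matrix.mulVec, dotProduct, Pi.single_apply,
        mul_ite, Finset.sum_ite_eq']⟩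
  ext x
  simp only [Set.mem_setOf_eq]
  constructor
  · rintro ⟨hxpos, hxM⟩
    set v : Fin n → ℝ := fun i => Real.log (x i) - Real.log (xs i) with hv
    have hvmem : v ∈ LinearMap.range B.mulVecLin := by
      rw [hB1]
      rintro u ⟨c, rfl⟩
      have hMv : ∀ j, ∑ i, M i j * v i = 0 := by
        intro j
        have h1 : matPow x M j = matPow xs M j := by rw [hxM, hsol]
        rw [matPow_eq_exp x hxpos, matPow_eq_exp xs hxs, Real.exp_eq_exp] at h1
        simp only [hv, mul_sub, Finset.sum_sub_distrib, h1, sub_self]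
      calc ∑ i, v i * (M.mulVecLin c) i
          = ∑ i, ∑ j, c j * (M i j * v i) := by
            refine Finset.sum_congr rfl fun i _ => ?_
            simp only [Matrix.mulVecLin_apply, Matrix.mulVec, dotProduct,
              Finset.mul_sum]
            exact Finset.sum_congr rfl fun j _ => by ring
        _ = 0 := by
            rw [Finset.sum_comm]
            simp only [← Finset.mul_sum, hMv, mul_zero, Finset.sum_const_zero]
    obtain ⟨w, hw⟩ := hvmem
    refine ⟨fun j => Real.exp (w j), fun j => Real.exp_pos _, ?_⟩
    funext i
    have hbt : matPow (fun j => Real.exp (w j)) B.transpose i = Real.exp (v i) := by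
      rw [matPow_eq_exp _ (fun j => Real.exp_pos _)]
      congr 1
      rw [← hw]
      simp [Matrix.mulVecLin, Matrix.mulVec, dotProduct, Matrix.transpose_apply,
        Real.log_exp, mul_comm]
    rw [hbt, hv]
    rw [Real.exp_sub, Real.exp_log (hxpos i), Real.exp_log (hxs i),
      mul_div_cancel₀ _ (ne_of_gt (hxs i))]
  · rintro ⟨ξ, hξ, rfl⟩
    have hxpos : ∀ i, 0 < xs i * matPow ξ B.transpose i := fun i =>
      mul_pos (hxs i) (by rw [matPow_eq_exp _ hξ]; exact Real.exp_pos _)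
    refine ⟨hxpos, ?_⟩
    funext j
    rw [matPow_eq_exp _ hxpos]
    have hlog : ∀ i, Real.log (xs i * matPow ξ B.transpose i)
        = Real.log (xs i) + ∑ k, B i k * Real.log (ξ k) := by
      intro i
      rw [matPow_eq_exp _ hξ, Real.log_mul (ne_of_gt (hxs i)) (Real.exp_ne_zero _),
        Real.log_exp]
      simp [Matrix.transpose_apply]
    have h2 : ∑ i, M i j * ∑ k, B i k * Real.log (ξ k) = 0 := by
      have hre : ∀ i, M i j * ∑ k, B i k * Real.log (ξ k)
          = ∑ k, B i k * M i j * Real.log (ξ k) := by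
        intro i; rw [Finset.mul_sum]; exact Finset.sum_congr rfl fun k _ => by ring
      simp only [hre]
      rw [Finset.sum_comm]
      simp only [← Finset.sum_mul, BTM, zero_mul, Finset.sum_const_zero]
    simp only [hlog, mul_add, Finset.sum_add_distrib, h2, add_zero]
    rw [← matPow_eq_exp xs hxs, hsol]
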